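/- arXiv:1605.03868 — 7 statements merged into one kernel-verified Lean document; each statement's English description precedes it below -/
import Mathlib

section
/- For fixed a ∈ (0,1) and all x ∈ (0,1), a·log(x/a) + (1−a)·log((1−x)/(1−a)) ≤ −(1/2)·(x−a)². (Equivalently, the binary Kullback–Leibler divergence KL(a‖x) = a·log(a/x) + (1−a)·log((1−a)/(1−x)) satisfies KL(a‖x) ≥ (1/2)(x−a)².) -/
/-! The function `t ↦ a log t + (1 - a) log (1 - t) + (t - a)² / 2` has derivative
`(t - a) (1 - 1 / (t (1 - t)))` on `(0, 1)`. Since `t (1 - t) ≤ 1/4`, the second factor is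
negative, so the function increases up to `t = a` and decreases afterwards; comparing its values
at `x` and at `a` is the claimed inequality. -/

open Real Set

lemma four_le_inv_mul_one_sub {t : ℝ} (ht : t ∈ Ioo (0 : ℝ) 1) : 4 ≤ (t * (1 - t))⁻¹ := by
  have hpos : 0 < t * (1 - t) := mul_pos ht.1 (sub_pos.2 ht.2)
  rw [le_inv_comm₀ (by norm_num) hpos]
  nlinarith [sq_nonneg (2 * t - 1)]

lemma hasDerivAt_log_likelihood_add_sq (a : ℝ) {t : ℝ} (ht0 : t ≠ 0) (ht1 : t ≠ 1) :
    HasDerivAt (fun s => a * log s + (1 - a) * log (1 - s) + (s - a) ^ 2 / 2)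
      ((t - a) * (1 - (t * (1 - t))⁻¹)) t := by
  have hlog₁ := ((hasDerivAt_id t).const_sub 1).log (sub_ne_zero.2 ht1.symm)
  have hsq := ((hasDerivAt_id t).sub_const a).pow 2
  refine ((((hasDerivAt_log ht0).const_mul a).add (hlog₁.const_mul (1 - a))).add
    (hsq.div_const 2)).congr_deriv ?_
  simp only [id]
  field_simp
  ring

lemma isMaxOn_log_likelihood_add_sq {a : ℝ} (ha : a ∈ Ioo (0 : ℝ) 1) :
    IsMaxOn (fun s => a * log s + (1 - a) * log (1 - s) + (s - a) ^ 2 / 2) (Ioo 0 1) a := by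
  have hderiv (t : ℝ) (ht : t ∈ Ioo (0 : ℝ) 1) :=
    hasDerivAt_log_likelihood_add_sq a ht.1.ne' ht.2.ne
  have hfactor (t : ℝ) (ht : t ∈ Ioo (0 : ℝ) 1) : 1 - (t * (1 - t))⁻¹ ≤ 0 := by
    linarith [four_le_inv_mul_one_sub ht]
  have hsub₀ : Ioo 0 a ⊆ Ioo (0 : ℝ) 1 := Ioo_subset_Ioo_right ha.2.le
  have hsub₁ : Ioo a 1 ⊆ Ioo (0 : ℝ) 1 := Ioo_subset_Ioo_left ha.1.le
  refine isMaxOn_Ioo_of_deriv (hderiv a ha).continuousAt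
    (fun t ht => (hderiv t (hsub₀ ht)).differentiableAt.differentiableWithinAt)
    (fun t ht => (hderiv t (hsub₁ ht)).differentiableAt.differentiableWithinAt) ?_ ?_
  · intro t ht
    rw [(hderiv t (hsub₀ ht)).deriv]
    exact mul_nonneg_of_nonpos_of_nonpos (sub_nonpos.2 ht.2.le) (hfactor t (hsub₀ ht))
  · intro t ht
    rw [(hderiv t (hsub₁ ht)).deriv]
    exact mul_nonpos_of_nonneg_of_nonpos (sub_nonneg.2 ht.1.le) (hfactor t (hsub₁ ht))

/-- For `a, x ∈ (0,1)`:
`a·log(x/a) + (1−a)·log((1−x)/(1−a)) ≤ −(1/2)·(x−a)²`,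
i.e. the binary KL divergence `KL(a‖x)` is at least `(1/2)(x−a)²`. -/
theorem binary_kl_quadratic_bound (a x : ℝ) (ha : a ∈ Set.Ioo (0:ℝ) 1)
    (hx : x ∈ Set.Ioo (0:ℝ) 1) :
    a * Real.log (x / a) + (1 - a) * Real.log ((1 - x) / (1 - a)) ≤
      -(1 / 2) * (x - a) ^ 2 := by
  have hmax := isMaxOn_log_likelihood_add_sq ha hx
  simp only [sub_self, mem_ofPred_eq] at hmax
  rw [log_div hx.1.ne' ha.1.ne', log_div (sub_pos.2 hx.2).ne' (sub_pos.2 ha.2).ne']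
  linarith
end

section
/- Let n ≥ 1, let (u₁,…,uₙ) be real numbers, and define for each b ∈ {1,…,n} the isotonic regression value v_b := min_{ℓ ≥ b} max_{k ≤ b} ( (u_k + u_{k+1} + ⋯ + u_ℓ)/(ℓ−k+1) ). Then the sequence (v₁,…,vₙ) is non-decreasing, i.e., v_b ≤ v_{b+1} for all 1 ≤ b ≤ n−1. -/
/-- The min-max isotonic regression values
`v_b = min_{ℓ ≥ b} max_{k ≤ b} (u_k + ⋯ + u_ℓ)/(ℓ−k+1)` form a non-decreasing
sequence: `v_b ≤ v_{b+1}` for all `1 ≤ b ≤ n−1`. -/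
theorem minmax_isotonic_monotone (n : ℕ) (hn : 1 ≤ n) (u : ℕ → ℝ)
    (b : ℕ) (hb1 : 1 ≤ b) (hbn : b + 1 ≤ n) :
    (Finset.Icc b n).inf' (Finset.nonempty_Icc.mpr (by omega))
        (fun ℓ => (Finset.Icc 1 b).sup' (Finset.nonempty_Icc.mpr (by omega))
          (fun k => (∑ i ∈ Finset.Icc k ℓ, u i) / ((ℓ - k + 1 : ℕ) : ℝ))) ≤
      (Finset.Icc (b + 1) n).inf' (Finset.nonempty_Icc.mpr (by omega))
        (fun ℓ => (Finset.Icc 1 (b + 1)).sup' (Finset.nonempty_Icc.mpr (by omega))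
          (fun k => (∑ i ∈ Finset.Icc k ℓ, u i) / ((ℓ - k + 1 : ℕ) : ℝ))) := by
  apply Finset.le_inf'
  intro ℓ hℓ
  have hℓ' : ℓ ∈ Finset.Icc b n := by
    simp only [Finset.mem_Icc] at hℓ ⊢; omega
  refine le_trans (Finset.inf'_le _ hℓ') ?_
  apply Finset.sup'_le
  intro k hk
  have hk2 : k ∈ Finset.Icc 1 (b + 1) := by
    simp only [Finset.mem_Icc] at hk ⊢; omega
  exact Finset.le_sup' (fun k => (∑ i ∈ Finset.Icc k ℓ, u i) / ((ℓ - k + 1 : ℕ) : ℝ)) hk2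
end

section
/- Let n ≥ 1 and let (u₁,…,uₙ) be real numbers. The vector (v₁,…,vₙ) defined by v_b := min_{ℓ ≥ b} max_{k ≤ b} ( (Σ_{i=k}^{ℓ} u_i)/(ℓ−k+1) ) minimizes Σ_{i=1}^{n} (u_i − w_i)² over all non-decreasing real vectors (w₁,…,wₙ). -/
noncomputable def mmAvg (u : ℕ → ℝ) (k ℓ : ℕ) : ℝ :=
  (∑ i ∈ Finset.Icc k ℓ, u i) / ((ℓ - k + 1 : ℕ) : ℝ)

lemma mm_cast {k ℓ : ℕ} (h : k ≤ ℓ) : ((ℓ - k + 1 : ℕ) : ℝ) = (ℓ:ℝ) - k + 1 := by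
  rw [Nat.cast_add, Nat.cast_sub h, Nat.cast_one]

lemma mm_cnt_pos {k ℓ : ℕ} (h : k ≤ ℓ) : (0:ℝ) < (ℓ:ℝ) - k + 1 := by
  have : (k:ℝ) ≤ ℓ := Nat.cast_le.mpr h
  linarith

lemma mmAvg_key (u : ℕ → ℝ) {k ℓ : ℕ} (h : k ≤ ℓ) :
    mmAvg u k ℓ * ((ℓ:ℝ) - k + 1) = ∑ i ∈ Finset.Icc k ℓ, u i := by
  rw [mmAvg, mm_cast h, div_mul_cancel₀]
  exact ne_of_gt (mm_cnt_pos h)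

lemma mmAvg_le_iff (u : ℕ → ℝ) {k ℓ : ℕ} (h : k ≤ ℓ) {c : ℝ} :
    mmAvg u k ℓ ≤ c ↔ ∑ i ∈ Finset.Icc k ℓ, u i ≤ ((ℓ:ℝ) - k + 1) * c := by
  have h1 := mmAvg_key u h
  have h2 := mm_cnt_pos h
  constructor <;> intro H <;> nlinarith

lemma le_mmAvg_iff (u : ℕ → ℝ) {k ℓ : ℕ} (h : k ≤ ℓ) {c : ℝ} :
    c ≤ mmAvg u k ℓ ↔ ((ℓ:ℝ) - k + 1) * c ≤ ∑ i ∈ Finset.Icc k ℓ, u i := by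
  have h1 := mmAvg_key u h
  have h2 := mm_cnt_pos h
  constructor <;> intro H <;> nlinarith

lemma lt_mmAvg_iff (u : ℕ → ℝ) {k ℓ : ℕ} (h : k ≤ ℓ) {c : ℝ} :
    c < mmAvg u k ℓ ↔ ((ℓ:ℝ) - k + 1) * c < ∑ i ∈ Finset.Icc k ℓ, u i := by
  have h1 := mmAvg_key u h
  have h2 := mm_cnt_pos h
  constructor <;> intro H <;> nlinarith

lemma mmAvg_eq_iff (u : ℕ → ℝ) {k ℓ : ℕ} (h : k ≤ ℓ) {c : ℝ} :
    mmAvg u k ℓ = c ↔ ∑ i ∈ Finset.Icc k ℓ, u i = ((ℓ:ℝ) - k + 1) * c := by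
  constructor <;> intro H
  · rw [← mmAvg_key u h, H]; ring
  · have h1 := mmAvg_key u h
    have h2 := mm_cnt_pos h
    have := h1.trans H
    field_simp at this
    rcases mul_right_cancel₀ (ne_of_gt h2) (by linarith : mmAvg u k ℓ * ((ℓ:ℝ) - k + 1) = c * ((ℓ:ℝ) - k + 1)) with h
    exact h

lemma mm_sum_split (f : ℕ → ℝ) {k m ℓ : ℕ} (hk : 1 ≤ k) (h1 : k ≤ m + 1) (h2 : m ≤ ℓ) :
    ∑ i ∈ Finset.Icc k ℓ, f i = ∑ i ∈ Finset.Icc k m, f i + ∑ i ∈ Finset.Icc (m+1) ℓ, f i := by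
  obtain ⟨p, rfl⟩ : ∃ p, k = p + 1 := ⟨k - 1, by omega⟩
  rw [Finset.Icc_add_one_left_eq_Ioc, Finset.Icc_add_one_left_eq_Ioc, Finset.Icc_add_one_left_eq_Ioc,
    Finset.sum_Ioc_consecutive f (by omega : p ≤ m) h2]

lemma mm_master (u : ℕ → ℝ) :
    ∀ d a n : ℕ, n ≤ a + d → a < n → ∀ w : ℕ → ℝ,
    (∀ b (hab : a < b) (hbn : b ≤ n),
      w b = (Finset.Icc b n).inf' (Finset.nonempty_Icc.mpr hbn)
        (fun ℓ => (Finset.Icc (a+1) b).sup' (Finset.nonempty_Icc.mpr hab)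
          (fun k => mmAvg u k ℓ))) →
    (∀ j, a < j → j ≤ n →
        ∑ b ∈ Finset.Icc (a+1) j, w b ≤ ∑ i ∈ Finset.Icc (a+1) j, u i) ∧
    (∑ b ∈ Finset.Icc (a+1) n, w b = ∑ i ∈ Finset.Icc (a+1) n, u i) ∧
    (∀ j, a < j → j < n → w j < w (j+1) →
        ∑ b ∈ Finset.Icc (a+1) j, w b = ∑ i ∈ Finset.Icc (a+1) j, u i) := by
  intro d
  induction d with
  | zero => intro a n h1 h2; omega
  | succ d ih =>
    intro a n hdn han w hw
    have hI : (Finset.Icc (a+1) n).Nonempty := Finset.nonempty_Icc.mpr han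
    obtain ⟨ℓ₀, hℓ₀mem, hℓ₀⟩ :=
      Finset.exists_mem_eq_inf' hI (fun ℓ => mmAvg u (a+1) ℓ)
    obtain ⟨c, hcdef⟩ : ∃ x : ℝ,
        x = (Finset.Icc (a+1) n).inf' hI (fun ℓ => mmAvg u (a+1) ℓ) := ⟨_, rfl⟩
    have hcle : ∀ ℓ, a < ℓ → ℓ ≤ n → c ≤ mmAvg u (a+1) ℓ := by
      intro ℓ h1 h2
      rw [hcdef]
      exact Finset.inf'_le (fun ℓ => mmAvg u (a+1) ℓ) (Finset.mem_Icc.mpr ⟨h1, h2⟩)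
    have hℓ₀c : mmAvg u (a+1) ℓ₀ = c := by rw [hcdef, ← hℓ₀]
    obtain ⟨s, hsdef⟩ : ∃ s : Finset ℕ,
        s = (Finset.Icc (a+1) n).filter (fun ℓ => mmAvg u (a+1) ℓ = c) := ⟨_, rfl⟩
    have hs : s.Nonempty := by
      rw [hsdef]
      exact ⟨ℓ₀, Finset.mem_filter.mpr ⟨hℓ₀mem, hℓ₀c⟩⟩
    obtain ⟨L, hLdef⟩ : ∃ L : ℕ, L = s.max' hs := ⟨_, rfl⟩
    have hLs : L ∈ s := by rw [hLdef]; exact s.max'_mem hs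
    have hmaxle : ∀ ℓ ∈ s, ℓ ≤ L := by
      intro ℓ h
      rw [hLdef]
      exact s.le_max' ℓ h
    rw [hsdef] at hLs
    have hLmem : L ∈ Finset.Icc (a+1) n := (Finset.mem_filter.mp hLs).1
    have hgL : mmAvg u (a+1) L = c := (Finset.mem_filter.mp hLs).2
    have hLa : a < L := (Finset.mem_Icc.mp hLmem).1
    have hLn : L ≤ n := (Finset.mem_Icc.mp hLmem).2
    have hstrict : ∀ ℓ, L < ℓ → ℓ ≤ n → c < mmAvg u (a+1) ℓ := by
      intro ℓ h1 h2
      rcases (hcle ℓ (by omega) h2).lt_or_eq with h | h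
      · exact h
      · refine absurd (hmaxle ℓ ?_) (by omega)
        rw [hsdef]
        exact Finset.mem_filter.mpr ⟨Finset.mem_Icc.mpr ⟨by omega, h2⟩, h.symm⟩
    -- quantitative facts
    have K1 : ∀ m, a < m → m ≤ n →
        ((m:ℝ) - a) * c ≤ ∑ i ∈ Finset.Icc (a+1) m, u i := by
      intro m h1 h2
      have H := (le_mmAvg_iff u (show a + 1 ≤ m by omega)).mp (hcle m h1 h2)
      push_cast at H
      have harith : ((m:ℝ) - a) * c = ((m:ℝ) - ((a:ℝ)+1) + 1) * c := by ring
      rw [harith]; exact H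
    have Keq : ∑ i ∈ Finset.Icc (a+1) L, u i = ((L:ℝ) - a) * c := by
      have H := (mmAvg_eq_iff u (show a + 1 ≤ L by omega)).mp hgL
      push_cast at H
      rw [H]; ring
    have K3 : ∀ ℓ, L < ℓ → ℓ ≤ n →
        ((ℓ:ℝ) - L) * c < ∑ i ∈ Finset.Icc (L+1) ℓ, u i := by
      intro ℓ h1 h2
      have hst := (lt_mmAvg_iff u (show a + 1 ≤ ℓ by omega)).mp (hstrict ℓ h1 h2)
      push_cast at hst
      have hsp := mm_sum_split u (show 1 ≤ a + 1 by omega) (show a+1 ≤ L+1 by omega)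
        (show L ≤ ℓ by omega)
      nlinarith [Keq]
    have K2 : ∀ k, a < k → k ≤ L →
        ∑ i ∈ Finset.Icc k L, u i ≤ ((L:ℝ) - k + 1) * c := by
      intro k h1 h2
      have hsp := mm_sum_split u (show 1 ≤ a + 1 by omega) (show a+1 ≤ (k-1)+1 by omega)
        (show k - 1 ≤ L by omega)
      rw [show k - 1 + 1 = k by omega] at hsp
      have hpre : ((k:ℝ) - 1 - a) * c ≤ ∑ i ∈ Finset.Icc (a+1) (k-1), u i := by
        rcases Nat.eq_or_lt_of_le (show a + 1 ≤ k from h1) with h | h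
        · rw [show k - 1 = a by omega, Finset.Icc_eq_empty (by omega),
            Finset.sum_empty]
          have hk : (k:ℝ) = (a:ℝ) + 1 := by rw [← h]; push_cast; ring
          have hz : ((k:ℝ) - 1 - (a:ℝ)) * c = 0 := by rw [hk]; ring
          rw [hz]
        · have H := K1 (k-1) (by omega) (by omega)
          have hc : ((k-1:ℕ):ℝ) = (k:ℝ) - 1 := by
            rw [Nat.cast_sub (by omega)]; norm_num
          rw [hc] at H; exact H
      nlinarith [Keq]
    -- block values
    have W1 : ∀ b, a < b → b ≤ L → w b = c := by
      intro b h1 h2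
      rw [hw b h1 (by omega)]
      apply le_antisymm
      · refine le_trans (Finset.inf'_le _ (Finset.mem_Icc.mpr ⟨h2, hLn⟩)) ?_
        apply Finset.sup'_le
        intro k hk
        have hk1 : a < k := by have := (Finset.mem_Icc.mp hk).1; omega
        have hk2 : k ≤ L := le_trans (Finset.mem_Icc.mp hk).2 h2
        exact (mmAvg_le_iff u hk2).mpr (K2 k hk1 hk2)
      · apply Finset.le_inf'
        intro ℓ hℓ
        have hℓ1 : b ≤ ℓ := (Finset.mem_Icc.mp hℓ).1
        have hℓ2 : ℓ ≤ n := (Finset.mem_Icc.mp hℓ).2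
        refine le_trans (hcle ℓ (by omega) hℓ2) ?_
        exact Finset.le_sup' (fun k => mmAvg u k ℓ)
          (Finset.mem_Icc.mpr ⟨le_refl (a+1), show a+1 ≤ b from h1⟩)
    have blocksum : ∀ j, a < j → j ≤ L →
        ∑ b ∈ Finset.Icc (a+1) j, w b = ((j:ℝ) - a) * c := by
      intro j h1 h2
      rw [Finset.sum_congr rfl (fun b hb => W1 b
        (by have := (Finset.mem_Icc.mp hb).1; omega)
        (le_trans (Finset.mem_Icc.mp hb).2 h2))]
      rw [Finset.sum_const, Nat.card_Icc, nsmul_eq_mul,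
        show j + 1 - (a+1) = j - a from by omega,
        Nat.cast_sub (show a ≤ j from by omega)]
    by_cases hLn' : L = n
    · refine ⟨?_, ?_, ?_⟩
      · intro j h1 h2
        rw [blocksum j h1 (by omega)]
        exact K1 j h1 h2
      · rw [← hLn', blocksum L (by omega) le_rfl, Keq]
      · intro j h1 h2 hlt
        rw [W1 j h1 (by omega), W1 (j+1) (by omega) (by omega)] at hlt
        exact absurd hlt (lt_irrefl c)
    · have hLn2 : L < n := by omega
      have K4 : ∀ k ℓ, a < k → k ≤ L → L < ℓ → ℓ ≤ n →
          mmAvg u k ℓ ≤ mmAvg u (L+1) ℓ := by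
        intro k ℓ hk1 hk2 hl1 hl2
        have h1 : L + 1 ≤ ℓ := by omega
        have hTA := (mmAvg_eq_iff u h1 (c := mmAvg u (L+1) ℓ)).mp rfl
        push_cast at hTA
        have hK3 := K3 ℓ hl1 hl2
        have hcA : c < mmAvg u (L+1) ℓ := by
          have hpos : (0:ℝ) < (ℓ:ℝ) - L := by
            have : ((L:ℝ)) < ℓ := by exact_mod_cast hl1
            linarith
          nlinarith
        rw [mmAvg_le_iff u (show k ≤ ℓ by omega)]
        have hsp := mm_sum_split u (show 1 ≤ k by omega) (show k ≤ L+1 by omega)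
          (show L ≤ ℓ by omega)
        have hK2 := K2 k hk1 hk2
        have hmul : ((L:ℝ) - k + 1) * c ≤ ((L:ℝ) - k + 1) * mmAvg u (L+1) ℓ :=
          mul_le_mul_of_nonneg_left (le_of_lt hcA) (le_of_lt (mm_cnt_pos hk2))
        nlinarith
      have W2 : ∀ b (h1 : L < b) (h2 : b ≤ n),
          w b = (Finset.Icc b n).inf' (Finset.nonempty_Icc.mpr h2)
            (fun ℓ => (Finset.Icc (L+1) b).sup' (Finset.nonempty_Icc.mpr h1)
              (fun k => mmAvg u k ℓ)) := by
        intro b h1 h2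
        rw [hw b (by omega) h2]
        apply Finset.inf'_congr _ rfl
        intro ℓ hℓ
        have hℓ1 : b ≤ ℓ := (Finset.mem_Icc.mp hℓ).1
        have hℓ2 : ℓ ≤ n := (Finset.mem_Icc.mp hℓ).2
        apply le_antisymm
        · apply Finset.sup'_le
          intro k hk
          have hk1 : a < k := by have := (Finset.mem_Icc.mp hk).1; omega
          have hk2 : k ≤ b := (Finset.mem_Icc.mp hk).2
          rcases le_or_gt k L with h | h
          · exact le_trans (K4 k ℓ hk1 h (by omega) hℓ2)
              (Finset.le_sup' (fun k => mmAvg u k ℓ)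
                (Finset.mem_Icc.mpr ⟨le_refl (L+1), show L+1 ≤ b from h1⟩))
          · exact Finset.le_sup' (fun k => mmAvg u k ℓ)
              (Finset.mem_Icc.mpr ⟨show L+1 ≤ k from h, hk2⟩)
        · apply Finset.sup'_le
          intro k hk
          have hm := Finset.mem_Icc.mp hk
          exact Finset.le_sup' (fun k => mmAvg u k ℓ)
            (Finset.mem_Icc.mpr ⟨show a+1 ≤ k by omega, hm.2⟩)
      obtain ⟨Q1, Q2, Q3⟩ := ih L n (by omega) hLn2 w W2
      have sum_split_w : ∀ j, L < j → j ≤ n →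
          ∑ b ∈ Finset.Icc (a+1) j, w b
            = ((L:ℝ) - a) * c + ∑ b ∈ Finset.Icc (L+1) j, w b := by
        intro j h1 h2
        rw [mm_sum_split w (by omega) (by omega) (show L ≤ j by omega),
          blocksum L (by omega) le_rfl]
      have sum_split_u : ∀ j, L < j → j ≤ n →
          ∑ i ∈ Finset.Icc (a+1) j, u i
            = ((L:ℝ) - a) * c + ∑ i ∈ Finset.Icc (L+1) j, u i := by
        intro j h1 h2
        rw [mm_sum_split u (by omega) (by omega) (show L ≤ j by omega), Keq]
      refine ⟨?_, ?_, ?_⟩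
      · intro j h1 h2
        rcases le_or_gt j L with h | h
        · rw [blocksum j h1 h]; exact K1 j h1 h2
        · rw [sum_split_w j h h2, sum_split_u j h h2]
          linarith [Q1 j h h2]
      · rw [sum_split_w n hLn2 le_rfl, sum_split_u n hLn2 le_rfl, Q2]
      · intro j h1 h2 hlt
        rcases lt_trichotomy j L with h | h | h
        · rw [W1 j h1 (by omega), W1 (j+1) (by omega) (by omega)] at hlt
          exact absurd hlt (lt_irrefl c)
        · rw [h, blocksum L (by omega) le_rfl, Keq]
        · rw [sum_split_w j h (by omega), sum_split_u j h (by omega),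
            Q3 j h h2 hlt]


lemma mm_abel (dd x : ℕ → ℝ) :
    ∀ m, 1 ≤ m →
      ∑ i ∈ Finset.Icc 1 m, dd i * x i
        = (∑ i ∈ Finset.Icc 1 m, dd i) * x m
          - ∑ j ∈ Finset.Icc 1 (m-1), (∑ i ∈ Finset.Icc 1 j, dd i) * (x (j+1) - x j) := by
  intro m hm
  induction m, hm using Nat.le_induction with
  | base => simp
  | succ m hm ih =>
    rw [Finset.sum_Icc_succ_top (by omega : 1 ≤ m + 1),
      Finset.sum_Icc_succ_top (by omega : 1 ≤ m + 1) dd, ih]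
    have hm' : m - 1 + 1 = m := by omega
    have hsum := Finset.sum_Icc_succ_top (a := 1) (b := m - 1)
      (f := fun j => (∑ i ∈ Finset.Icc 1 j, dd i) * (x (j+1) - x j)) (by omega)
    rw [hm'] at hsum
    rw [show m + 1 - 1 = m from rfl, hsum]
    ring

/-- The min-max vector
`v_b = min_{ℓ ≥ b} max_{k ≤ b} (Σ_{i=k}^{ℓ} u_i)/(ℓ−k+1)` is non-decreasing and
minimizes `Σ_{i=1}^{n} (u_i − w_i)²` over all non-decreasing vectors `w`. -/
theorem minmax_isotonic_least_squares (n : ℕ) (hn : 1 ≤ n) (u : ℕ → ℝ)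
    (v : ℕ → ℝ)
    (hv : ∀ b (hb1 : 1 ≤ b) (hbn : b ≤ n),
      v b = (Finset.Icc b n).inf' (Finset.nonempty_Icc.mpr (by omega))
        (fun ℓ => (Finset.Icc 1 b).sup' (Finset.nonempty_Icc.mpr (by omega))
          (fun k => (∑ i ∈ Finset.Icc k ℓ, u i) / ((ℓ - k + 1 : ℕ) : ℝ)))) :
    (∀ i j, 1 ≤ i → i ≤ j → j ≤ n → v i ≤ v j) ∧
    ∀ w : ℕ → ℝ, (∀ i j, 1 ≤ i → i ≤ j → j ≤ n → w i ≤ w j) →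
      ∑ i ∈ Finset.Icc 1 n, (u i - v i) ^ 2 ≤
        ∑ i ∈ Finset.Icc 1 n, (u i - w i) ^ 2 := by
  have hmono : ∀ i j, 1 ≤ i → i ≤ j → j ≤ n → v i ≤ v j := by
    intro i j hi hij hjn
    rw [hv i hi (le_trans hij hjn), hv j (le_trans hi hij) hjn]
    apply Finset.le_inf'
    intro ℓ hℓ
    have hm := Finset.mem_Icc.mp hℓ
    refine le_trans (Finset.inf'_le _ (Finset.mem_Icc.mpr ⟨le_trans hij hm.1, hm.2⟩)) ?_
    apply Finset.sup'_le
    intro k hk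
    have hk' := Finset.mem_Icc.mp hk
    exact Finset.le_sup'
      (fun k => (∑ i ∈ Finset.Icc k ℓ, u i) / ((ℓ - k + 1 : ℕ) : ℝ))
      (Finset.mem_Icc.mpr ⟨hk'.1, le_trans hk'.2 hij⟩)
  obtain ⟨P1, P2, P3⟩ := mm_master u n 0 n (by omega) (by omega) v
    (by intro b h1 h2; exact hv b h1 h2)
  refine ⟨hmono, ?_⟩
  intro w hwmono
  -- partial sums of u - v
  have hS : ∀ j, 1 ≤ j → j ≤ n → 0 ≤ ∑ i ∈ Finset.Icc 1 j, (u i - v i) := by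
    intro j h1 h2
    rw [Finset.sum_sub_distrib]
    have := P1 j h1 h2
    linarith
  have hSn : ∑ i ∈ Finset.Icc 1 n, (u i - v i) = 0 := by
    rw [Finset.sum_sub_distrib]
    linarith [P2]
  have hSjump : ∀ j, 1 ≤ j → j < n → v j < v (j+1) →
      ∑ i ∈ Finset.Icc 1 j, (u i - v i) = 0 := by
    intro j h1 h2 hlt
    rw [Finset.sum_sub_distrib]
    have := P3 j h1 h2 hlt
    linarith
  have Hv : ∑ i ∈ Finset.Icc 1 n, (u i - v i) * v i = 0 := by
    rw [mm_abel (fun i => u i - v i) v n hn, hSn]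
    have hz : ∑ j ∈ Finset.Icc 1 (n-1),
        (∑ i ∈ Finset.Icc 1 j, (u i - v i)) * (v (j+1) - v j) = 0 := by
      apply Finset.sum_eq_zero
      intro j hj
      have hj' := Finset.mem_Icc.mp hj
      have hjn : j < n := by omega
      rcases (hmono j (j+1) hj'.1 (by omega) (by omega)).lt_or_eq with h | h
      · rw [hSjump j hj'.1 hjn h, zero_mul]
      · rw [h]; ring
    rw [hz]; ring
  have Hw : ∑ i ∈ Finset.Icc 1 n, (u i - v i) * w i ≤ 0 := by
    rw [mm_abel (fun i => u i - v i) w n hn, hSn, zero_mul]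
    have hnn : 0 ≤ ∑ j ∈ Finset.Icc 1 (n-1),
        (∑ i ∈ Finset.Icc 1 j, (u i - v i)) * (w (j+1) - w j) := by
      apply Finset.sum_nonneg
      intro j hj
      have hj' := Finset.mem_Icc.mp hj
      apply mul_nonneg (hS j hj'.1 (by omega))
      have := hwmono j (j+1) hj'.1 (by omega) (by omega)
      linarith
    linarith
  have expand : ∑ i ∈ Finset.Icc 1 n, (u i - w i)^2
      = ∑ i ∈ Finset.Icc 1 n, (u i - v i)^2
        + ∑ i ∈ Finset.Icc 1 n, (v i - w i)^2
        + 2 * ∑ i ∈ Finset.Icc 1 n, (u i - v i) * v i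
        - 2 * ∑ i ∈ Finset.Icc 1 n, (u i - v i) * w i := by
    rw [Finset.mul_sum, Finset.mul_sum, ← Finset.sum_add_distrib,
      ← Finset.sum_add_distrib, ← Finset.sum_sub_distrib]
    exact Finset.sum_congr rfl (fun i _ => by ring)
  have hnn : 0 ≤ ∑ i ∈ Finset.Icc 1 n, (v i - w i)^2 :=
    Finset.sum_nonneg (fun i _ => sq_nonneg _)
  linarith
end

section
/- Under the IV identification assumptions (SUTVA, independence of the instrument Z from potential outcomes and potential treatments, monotonicity D(1) ≥ D(0), exclusion restriction, and P(D(1)=1) > P(D(0)=1)), the CDF of the potential outcome under treatment for compliers satisfies F_co^{(1)}(t) = [E(1{Y ≤ t}·D | Z=1) − E(1{Y ≤ t}·D | Z=0)] / [E(D | Z=1) − E(D | Z=0)] for all t. -/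
/-!
Conditioning on `Z = z` does not change the law of `(Y(0), Y(1), D(0), D(1))`, and on that event
`D = D(z)` and `1{Y ≤ t}·D = 1{Y(1) ≤ t, D(z) = 1}`. So the numerator and denominator are
`P(Y(1) ≤ t, D(1) = 1) − P(Y(1) ≤ t, D(0) = 1)` and `P(D(1) = 1) − P(D(0) = 1)`. Monotonicity
makes `{D(0) = 1} ⊆ {D(1) = 1}` almost surely, so these differences are `P(complier, Y(1) ≤ t)`
and `P(complier)`.
-/

open MeasureTheory ProbabilityTheory

section

variable {Ω α β : Type*} {mΩ : MeasurableSpace Ω} {mα : MeasurableSpace α}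
  {mβ : MeasurableSpace β} {μ : Measure Ω}

theorem measureReal_sdiff_of_ae_subset [IsFiniteMeasure μ] {s t : Set Ω} (h : t ≤ᵐ[μ] s)
    (ht : MeasurableSet t) : μ.real (s \ t) = μ.real s - μ.real t := by
  rw [measureReal_sdiff' ht, measureReal_congr (union_ae_eq_left_iff_ae_subset.2 h)]

/-- When `μ s = 0` both sides are `0`, since `μ[|s] = 0` and `x / 0 = 0`. -/
theorem toReal_cond_apply {s : Set Ω} (hs : MeasurableSet s) (t : Set Ω) :
    (μ[t|s]).toReal = μ.real (s ∩ t) / μ.real s := by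
  rw [cond_apply hs, ENNReal.toReal_mul, ENNReal.toReal_inv, inv_mul_eq_div, measureReal_def,
    measureReal_def]

theorem ProbabilityTheory.IndepFun.cond_apply_preimage [IsFiniteMeasure μ]
    {Z : Ω → α} {W : Ω → β} (hindep : IndepFun Z W μ) (hZ : Measurable Z)
    {s : Set α} (hs : MeasurableSet s) (hZs : μ (Z ⁻¹' s) ≠ 0) {t : Set β} (ht : MeasurableSet t) :
    μ[W ⁻¹' t|Z ⁻¹' s] = μ (W ⁻¹' t) := by
  rw [cond_apply (hZ hs), hindep.measure_inter_preimage_eq_mul s t hs ht,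
    ENNReal.inv_mul_cancel_left hZs (measure_ne_top μ _)]

theorem ProbabilityTheory.IndepFun.integral_cond_eq_measureReal [IsFiniteMeasure μ]
    {Z : Ω → α} {W : Ω → β} (hindep : IndepFun Z W μ) (hZ : Measurable Z)
    (hW : Measurable W) {s : Set α} (hs : MeasurableSet s) (hZs : μ (Z ⁻¹' s) ≠ 0) {t : Set β}
    (ht : MeasurableSet t) {f : Ω → ℝ} (hf : ∀ ω ∈ Z ⁻¹' s, f ω = (W ⁻¹' t).indicator 1 ω) :
    ∫ ω, f ω ∂μ[|Z ⁻¹' s] = μ.real (W ⁻¹' t) := by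
  rw [integral_congr_ae (ae_cond_of_forall_mem (hZ hs) hf), integral_indicator_one (hW ht),
    measureReal_def, measureReal_def, hindep.cond_apply_preimage hZ hs hZs ht]

theorem measureReal_inter_sub_of_ae_le [IsFiniteMeasure μ] {D₀ D₁ : Ω → ℝ}
    (hD₀ : Measurable D₀) (h₀ : ∀ ω, D₀ ω = 0 ∨ D₀ ω = 1) (h₁ : ∀ ω, D₁ ω = 0 ∨ D₁ ω = 1)
    (hle : D₀ ≤ᵐ[μ] D₁) {E : Set Ω} (hE : MeasurableSet E) :
    μ.real (E ∩ {ω | D₁ ω = 1}) - μ.real (E ∩ {ω | D₀ ω = 1}) =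
      μ.real ({ω | D₁ ω = 1 ∧ D₀ ω = 0} ∩ E) := by
  have hsub : (E ∩ {ω | D₀ ω = 1} : Set Ω) ≤ᵐ[μ] (E ∩ {ω | D₁ ω = 1} : Set Ω) := by
    filter_upwards [hle] with ω hω ⟨hωE, hω₀⟩
    refine ⟨hωE, (h₁ ω).resolve_left fun h ↦ ?_⟩
    rw [hω₀, h] at hω
    norm_num at hω
  rw [← measureReal_sdiff_of_ae_subset hsub (hE.inter (hD₀ (measurableSet_singleton 1)))]
  congr 1
  ext ω
  rcases h₀ ω with h | h <;> simp [h] <;> tauto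

end

section TreatmentArm

variable {Ω α : Type*} {mΩ : MeasurableSpace Ω} {mα : MeasurableSpace α} {μ : Measure Ω}
  [IsFiniteMeasure μ] [MeasurableSingletonClass α] {Z : Ω → α} {z : α} {D Dz Y Y₀ Y₁ : Ω → ℝ}

theorem integral_cond_treatment_eq (hindep : IndepFun Z Dz μ)
    (hZ : Measurable Z) (hZz : μ {ω | Z ω = z} ≠ 0) (hDz : Measurable Dz)
    (hDz_bin : ∀ ω, Dz ω = 0 ∨ Dz ω = 1) (hD : ∀ ω, Z ω = z → D ω = Dz ω) :
    ∫ ω, D ω ∂μ[|{ω | Z ω = z}] = μ.real {ω | Dz ω = 1} :=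
  hindep.integral_cond_eq_measureReal hZ hDz (measurableSet_singleton z) hZz
    (measurableSet_singleton 1) fun ω hω ↦ by
      rw [hD ω hω]; rcases hDz_bin ω with h | h <;> simp [h]

theorem integral_cond_ite_le_eq (hindep : IndepFun Z (fun ω ↦ (Y₁ ω, Dz ω)) μ)
    (hZ : Measurable Z) (hZz : μ {ω | Z ω = z} ≠ 0) (hY₁ : Measurable Y₁) (hDz : Measurable Dz)
    (hDz_bin : ∀ ω, Dz ω = 0 ∨ Dz ω = 1) (hD : ∀ ω, Z ω = z → D ω = Dz ω)
    (hY : ∀ ω, Y ω = D ω * Y₁ ω + (1 - D ω) * Y₀ ω) (t : ℝ) :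
    ∫ ω, (if Y ω ≤ t then D ω else 0) ∂μ[|{ω | Z ω = z}] =
      μ.real ({ω | Y₁ ω ≤ t} ∩ {ω | Dz ω = 1}) :=
  hindep.integral_cond_eq_measureReal hZ (hY₁.prodMk hDz) (measurableSet_singleton z) hZz
    (measurableSet_Iic.prod (measurableSet_singleton 1)) fun ω hω ↦ by
      rw [hY, hD ω hω]; rcases hDz_bin ω with h | h <;> simp [Set.indicator, h]

end TreatmentArm

theorem complier_treated_cdf_identification_general {Ω : Type*} [MeasurableSpace Ω]
    (μ : Measure Ω) [IsProbabilityMeasure μ]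
    (Z D0 D1 Y0 Y1 D Y : Ω → ℝ)
    (hZ : Measurable Z) (hD0 : Measurable D0) (hD1 : Measurable D1)
    (hY1 : Measurable Y1)
    (hD0bin : ∀ ω, D0 ω = 0 ∨ D0 ω = 1)
    (hD1bin : ∀ ω, D1 ω = 0 ∨ D1 ω = 1)
    (hD : ∀ ω, D ω = Z ω * D1 ω + (1 - Z ω) * D0 ω)
    (hYobs : ∀ ω, Y ω = D ω * Y1 ω + (1 - D ω) * Y0 ω)
    (hindep : IndepFun Z (fun ω => (Y0 ω, Y1 ω, D0 ω, D1 ω)) μ)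
    (hmono : ∀ᵐ ω ∂μ, D0 ω ≤ D1 ω)
    (hZ1 : 0 < μ {ω | Z ω = 1}) (hZ0 : 0 < μ {ω | Z ω = 0}) :
    ∀ t : ℝ,
      (μ[|{ω | D1 ω = 1 ∧ D0 ω = 0}] {ω | Y1 ω ≤ t}).toReal =
        ((∫ ω, (if Y ω ≤ t then D ω else 0) ∂μ[|{ω | Z ω = 1}]) -
            ∫ ω, (if Y ω ≤ t then D ω else 0) ∂μ[|{ω | Z ω = 0}]) /
          ((∫ ω, D ω ∂μ[|{ω | Z ω = 1}]) - ∫ ω, D ω ∂μ[|{ω | Z ω = 0}]) := by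
  intro t
  have hD_of_one (ω) (hω : Z ω = 1) : D ω = D1 ω := by rw [hD, hω]; ring
  have hD_of_zero (ω) (hω : Z ω = 0) : D ω = D0 ω := by rw [hD, hω]; ring
  have hindep_Y1D1 : IndepFun Z (fun ω ↦ (Y1 ω, D1 ω)) μ :=
    hindep.comp measurable_id (measurable_snd.fst.prodMk measurable_snd.snd.snd)
  have hindep_Y1D0 : IndepFun Z (fun ω ↦ (Y1 ω, D0 ω)) μ :=
    hindep.comp measurable_id (measurable_snd.fst.prodMk measurable_snd.snd.fst)
  have hindep_D1 : IndepFun Z D1 μ := hindep.comp measurable_id measurable_snd.snd.snd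
  have hindep_D0 : IndepFun Z D0 μ := hindep.comp measurable_id measurable_snd.snd.fst
  have hcompliers := measureReal_inter_sub_of_ae_le hD0 hD0bin hD1bin hmono MeasurableSet.univ
  simp only [Set.univ_inter, Set.inter_univ] at hcompliers
  have hC : MeasurableSet {ω | D1 ω = 1 ∧ D0 ω = 0} :=
    (hD1 (measurableSet_singleton 1)).inter (hD0 (measurableSet_singleton 0))
  rw [toReal_cond_apply hC,
    integral_cond_ite_le_eq hindep_Y1D1 hZ hZ1.ne' hY1 hD1 hD1bin hD_of_one hYobs,
    integral_cond_ite_le_eq hindep_Y1D0 hZ hZ0.ne' hY1 hD0 hD0bin hD_of_zero hYobs,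
    integral_cond_treatment_eq hindep_D1 hZ hZ1.ne' hD1 hD1bin hD_of_one,
    integral_cond_treatment_eq hindep_D0 hZ hZ0.ne' hD0 hD0bin hD_of_zero, hcompliers,
    measureReal_inter_sub_of_ae_le hD0 hD0bin hD1bin hmono (measurableSet_le hY1 measurable_const)]

/-- IV identification of the complier-treated outcome CDF:
`F_co^{(1)}(t) = [E(1{Y≤t}·D | Z=1) − E(1{Y≤t}·D | Z=0)] / [E(D|Z=1) − E(D|Z=0)]`. -/
theorem complier_treated_cdf_identification {Ω : Type*} [MeasurableSpace Ω]
    (μ : Measure Ω) [IsProbabilityMeasure μ]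
    (Z D0 D1 Y0 Y1 D Y : Ω → ℝ)
    (hZ : Measurable Z) (hD0 : Measurable D0) (hD1 : Measurable D1)
    (hY0 : Measurable Y0) (hY1 : Measurable Y1)
    (hZbin : ∀ ω, Z ω = 0 ∨ Z ω = 1)
    (hD0bin : ∀ ω, D0 ω = 0 ∨ D0 ω = 1)
    (hD1bin : ∀ ω, D1 ω = 0 ∨ D1 ω = 1)
    (hD : ∀ ω, D ω = Z ω * D1 ω + (1 - Z ω) * D0 ω)
    (hYobs : ∀ ω, Y ω = D ω * Y1 ω + (1 - D ω) * Y0 ω)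
    (hindep : IndepFun Z (fun ω => (Y0 ω, Y1 ω, D0 ω, D1 ω)) μ)
    (hmono : ∀ᵐ ω ∂μ, D0 ω ≤ D1 ω)
    (hnonzero : μ {ω | D0 ω = 1} < μ {ω | D1 ω = 1})
    (hZ1 : 0 < μ {ω | Z ω = 1}) (hZ0 : 0 < μ {ω | Z ω = 0}) :
    ∀ t : ℝ,
      (μ[|{ω | D1 ω = 1 ∧ D0 ω = 0}] {ω | Y1 ω ≤ t}).toReal =
        ((∫ ω, (if Y ω ≤ t then D ω else 0) ∂μ[|{ω | Z ω = 1}]) -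
            ∫ ω, (if Y ω ≤ t then D ω else 0) ∂μ[|{ω | Z ω = 0}]) /
          ((∫ ω, D ω ∂μ[|{ω | Z ω = 1}]) - ∫ ω, D ω ∂μ[|{ω | Z ω = 0}]) :=
  complier_treated_cdf_identification_general μ Z D0 D1 Y0 Y1 D Y hZ hD0 hD1 hY1 hD0bin hD1bin hD
    hYobs hindep hmono hZ1 hZ0
end

section
/- Under the IV identification assumptions, for every t ∈ ℝ: F_co^{(0)}(t) − F_co^{(1)}(t) = K·(F₀(t) − F₁(t)), where F₀(t) = P(Y ≤ t | Z=0), F₁(t) = P(Y ≤ t | Z=1), and K = 1/(E(D|Z=1) − E(D|Z=0)). In particular, F_co^{(0)} = F_co^{(1)} if and only if F₀ = F₁. -/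
/-!
On `{Z = z}` the observed outcome is `Y(D(z))`, and since `Z` is independent of the potential
variables, conditioning on `{Z = z}` leaves the law of `Y(D(z))` unchanged. By monotonicity,
`{D(1) = 1}` splits into the always-takers `{D(0) = 1}` and the compliers, and `{D(0) = 0}`
into the never-takers `{D(1) = 0}` and the compliers. In `F₀(t) − F₁(t)` the always- and
never-taker contributions cancel, leaving `P(co, Y(0) ≤ t) − P(co, Y(1) ≤ t)`, while
`E(D | Z = 1) − E(D | Z = 0) = P(D(1) = 1) − P(D(0) = 1) = P(co) > 0`.
-/

open MeasureTheory ProbabilityTheory Set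

section

variable {Ω : Type*}

theorem setOf_eq_one_and_eq_zero_eq_sdiff {d₀ d₁ : Ω → ℝ} (hd₀bin : ∀ ω, d₀ ω = 0 ∨ d₀ ω = 1) :
    {ω | d₁ ω = 1 ∧ d₀ ω = 0} = {ω | d₁ ω = 1} \ {ω | d₀ ω = 1} := by
  ext ω
  rcases hd₀bin ω with h | h <;> simp [h]

variable [MeasurableSpace Ω] {μ : Measure Ω}

namespace ProbabilityTheory

theorem cond_real_apply {s : Set Ω} (hs : MeasurableSet s) (t : Set Ω) :
    (μ[|s]).real t = (μ.real s)⁻¹ * μ.real (s ∩ t) := by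
  simp only [measureReal_def, cond_apply hs, ENNReal.toReal_mul, ENNReal.toReal_inv]

theorem IndepFun.cond_preimage_eq [IsFiniteMeasure μ] {β γ : Type*} [MeasurableSpace β]
    [MeasurableSpace γ] {Z : Ω → β} {X : Ω → γ} (hZ : Measurable Z) (hindep : IndepFun Z X μ)
    {s : Set β} (hs : MeasurableSet s) (hμs : μ (Z ⁻¹' s) ≠ 0) {T : Set γ}
    (hT : MeasurableSet T) :
    μ[|Z ⁻¹' s] (X ⁻¹' T) = μ (X ⁻¹' T) := by
  rw [cond_apply (hZ hs), hindep.measure_inter_preimage_eq_mul _ _ hs hT, ← mul_assoc,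
    ENNReal.inv_mul_cancel hμs (measure_ne_top _ _), one_mul]

end ProbabilityTheory

theorem integral_eq_measureReal_of_binary {ν : Measure Ω} {d : Ω → ℝ} (hd : Measurable d)
    (hbin : ∀ ω, d ω = 0 ∨ d ω = 1) :
    ∫ ω, d ω ∂ν = ν.real {ω | d ω = 1} :=
  calc ∫ ω, d ω ∂ν = ∫ ω, {ω | d ω = 1}.indicator 1 ω ∂ν :=
        integral_congr_ae <| ae_of_all _ fun ω => by rcases hbin ω with h | h <;> simp [h]
    _ = ν.real {ω | d ω = 1} := integral_indicator_one (hd (measurableSet_singleton 1))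

theorem integral_cond_eq_measureReal_of_indepFun [IsFiniteMeasure μ] {β : Type*}
    [MeasurableSpace β] [MeasurableSingletonClass β] {Z : Ω → β} {z : β} {D d : Ω → ℝ}
    (hZ : Measurable Z) (hd : Measurable d) (hbin : ∀ ω, d ω = 0 ∨ d ω = 1)
    (hindep : IndepFun Z d μ) (hμz : μ {ω | Z ω = z} ≠ 0) (hDd : ∀ ω, Z ω = z → D ω = d ω) :
    ∫ ω, D ω ∂μ[|{ω | Z ω = z}] = μ.real {ω | d ω = 1} := by
  have hz : MeasurableSet {ω | Z ω = z} := hZ (measurableSet_singleton z)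
  rw [integral_congr_ae ((ae_cond_mem hz).mono hDd),
    integral_eq_measureReal_of_binary hd hbin]
  exact congrArg ENNReal.toReal
    (hindep.cond_preimage_eq hZ (measurableSet_singleton z) hμz (measurableSet_singleton 1))

theorem cond_measureReal_setOf_le_eq_of_indepFun [IsFiniteMeasure μ] {β : Type*}
    [MeasurableSpace β] [MeasurableSingletonClass β] {Z : Ω → β} {z : β} {Y X : Ω → ℝ}
    (hZ : Measurable Z) (hindep : IndepFun Z X μ) (hμz : μ {ω | Z ω = z} ≠ 0)
    (hYX : ∀ ω, Z ω = z → Y ω = X ω) (t : ℝ) :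
    (μ[|{ω | Z ω = z}]).real {ω | Y ω ≤ t} = μ.real {ω | X ω ≤ t} := by
  have hz : MeasurableSet {ω | Z ω = z} := hZ (measurableSet_singleton z)
  have hlevel : {ω | Z ω = z} ∩ {ω | Y ω ≤ t} = {ω | Z ω = z} ∩ {ω | X ω ≤ t} :=
    EqOn.inter_preimage_eq (fun ω hω => hYX ω hω) (Iic t)
  rw [measureReal_def, ← cond_inter_self hz, hlevel, cond_inter_self hz]
  exact congrArg ENNReal.toReal
    (hindep.cond_preimage_eq hZ (measurableSet_singleton z) hμz measurableSet_Iic)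

theorem measureReal_inter_eq_add_sdiff_inter [IsFiniteMeasure μ] {A B : Set Ω}
    (hA : MeasurableSet A) (hAB : A ≤ᵐ[μ] B) (S : Set Ω) :
    μ.real (B ∩ S) = μ.real (A ∩ S) + μ.real ((B \ A) ∩ S) := by
  have hBSA : (B ∩ S ∩ A : Set Ω) =ᵐ[μ] (A ∩ S : Set Ω) := by
    filter_upwards [hAB] with ω hω
    exact propext ⟨fun ⟨⟨_, hS⟩, hA⟩ => ⟨hA, hS⟩, fun ⟨hA, hS⟩ => ⟨⟨hω hA, hS⟩, hA⟩⟩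
  rw [← measureReal_inter_add_sdiff (s := B ∩ S) hA, measureReal_congr hBSA, inter_sdiff_right_comm]

theorem setOf_eq_one_ae_le_of_ae_le {d₀ d₁ : Ω → ℝ} (hd₁bin : ∀ ω, d₁ ω = 0 ∨ d₁ ω = 1)
    (hmono : ∀ᵐ ω ∂μ, d₀ ω ≤ d₁ ω) : {ω | d₀ ω = 1} ≤ᵐ[μ] {ω | d₁ ω = 1} := by
  filter_upwards [hmono] with ω hω (h₀ : d₀ ω = 1)
  rcases hd₁bin ω with h₁ | h₁
  · linarith
  · exact h₁

theorem measureReal_compliers_eq_sub [IsFiniteMeasure μ] {d₀ d₁ : Ω → ℝ} (hd₀ : Measurable d₀)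
    (hd₀bin : ∀ ω, d₀ ω = 0 ∨ d₀ ω = 1) (hd₁bin : ∀ ω, d₁ ω = 0 ∨ d₁ ω = 1)
    (hmono : ∀ᵐ ω ∂μ, d₀ ω ≤ d₁ ω) :
    μ.real {ω | d₁ ω = 1 ∧ d₀ ω = 0} = μ.real {ω | d₁ ω = 1} - μ.real {ω | d₀ ω = 1} := by
  have h := measureReal_inter_eq_add_sdiff_inter (A := {ω | d₀ ω = 1})
    (hd₀ (measurableSet_singleton 1)) (setOf_eq_one_ae_le_of_ae_le hd₁bin hmono) univ
  simp only [inter_univ] at h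
  rw [setOf_eq_one_and_eq_zero_eq_sdiff hd₀bin, h]
  ring

/-- The switching equation: `x₁` is revealed where `d = 1` and `x₀` where `d = 0`. -/
def select (d x₀ x₁ : Ω → ℝ) (ω : Ω) : ℝ := d ω * x₁ ω + (1 - d ω) * x₀ ω

theorem measureReal_select_preimage [IsFiniteMeasure μ] {d x₀ x₁ : Ω → ℝ} (hd : Measurable d)
    (hx₀ : Measurable x₀) (hbin : ∀ ω, d ω = 0 ∨ d ω = 1) {T : Set ℝ} (hT : MeasurableSet T) :
    μ.real (select d x₀ x₁ ⁻¹' T) =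
      μ.real ({ω | d ω = 1} ∩ x₁ ⁻¹' T) + μ.real ({ω | d ω = 1}ᶜ ∩ x₀ ⁻¹' T) := by
  have hsplit : select d x₀ x₁ ⁻¹' T =
      ({ω | d ω = 1} ∩ x₁ ⁻¹' T) ∪ ({ω | d ω = 1}ᶜ ∩ x₀ ⁻¹' T) := by
    ext ω
    rcases hbin ω with h | h <;> simp [select, h]
  have hdisj : Disjoint ({ω | d ω = 1} ∩ x₁ ⁻¹' T) ({ω | d ω = 1}ᶜ ∩ x₀ ⁻¹' T) :=
    (disjoint_compl_right.inter_left _).inter_right _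
  rw [hsplit, measureReal_union hdisj ((hd (measurableSet_singleton 1)).compl.inter (hx₀ hT))]

theorem measureReal_select_sub_select [IsFiniteMeasure μ] {d₀ d₁ x₀ x₁ : Ω → ℝ}
    (hd₀ : Measurable d₀) (hd₁ : Measurable d₁) (hx₀ : Measurable x₀)
    (hd₀bin : ∀ ω, d₀ ω = 0 ∨ d₀ ω = 1) (hd₁bin : ∀ ω, d₁ ω = 0 ∨ d₁ ω = 1)
    (hmono : ∀ᵐ ω ∂μ, d₀ ω ≤ d₁ ω) {T : Set ℝ} (hT : MeasurableSet T) :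
    μ.real (select d₀ x₀ x₁ ⁻¹' T) - μ.real (select d₁ x₀ x₁ ⁻¹' T) =
      μ.real ({ω | d₁ ω = 1 ∧ d₀ ω = 0} ∩ x₀ ⁻¹' T) -
        μ.real ({ω | d₁ ω = 1 ∧ d₀ ω = 0} ∩ x₁ ⁻¹' T) := by
  have hle := setOf_eq_one_ae_le_of_ae_le hd₁bin hmono
  have htreated := measureReal_inter_eq_add_sdiff_inter (A := {ω | d₀ ω = 1})
    (hd₀ (measurableSet_singleton 1)) hle (x₁ ⁻¹' T)
  have huntreated := measureReal_inter_eq_add_sdiff_inter (A := {ω | d₁ ω = 1}ᶜ)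
    (hd₁ (measurableSet_singleton 1)).compl hle.compl (x₀ ⁻¹' T)
  rw [compl_sdiff_compl] at huntreated
  rw [measureReal_select_preimage hd₀ hx₀ hd₀bin hT, measureReal_select_preimage hd₁ hx₀ hd₁bin hT,
    setOf_eq_one_and_eq_zero_eq_sdiff hd₀bin]
  linarith

end

theorem complier_cdf_difference_identity_general {Ω : Type*} [MeasurableSpace Ω]
    (μ : Measure Ω) [IsProbabilityMeasure μ]
    (Z D0 D1 Y0 Y1 D Y : Ω → ℝ)
    (hZ : Measurable Z) (hD0 : Measurable D0) (hD1 : Measurable D1)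
    (hY0 : Measurable Y0)
    (hD0bin : ∀ ω, D0 ω = 0 ∨ D0 ω = 1)
    (hD1bin : ∀ ω, D1 ω = 0 ∨ D1 ω = 1)
    (hD : ∀ ω, D ω = Z ω * D1 ω + (1 - Z ω) * D0 ω)
    (hYobs : ∀ ω, Y ω = D ω * Y1 ω + (1 - D ω) * Y0 ω)
    (hindep : IndepFun Z (fun ω => (Y0 ω, Y1 ω, D0 ω, D1 ω)) μ)
    (hmono : ∀ᵐ ω ∂μ, D0 ω ≤ D1 ω)
    (hnonzero : μ {ω | D0 ω = 1} < μ {ω | D1 ω = 1})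
    (hZ1 : 0 < μ {ω | Z ω = 1}) (hZ0 : 0 < μ {ω | Z ω = 0}) :
    (∀ t : ℝ,
      (μ[|{ω | D1 ω = 1 ∧ D0 ω = 0}] {ω | Y0 ω ≤ t}).toReal -
          (μ[|{ω | D1 ω = 1 ∧ D0 ω = 0}] {ω | Y1 ω ≤ t}).toReal =
        (1 / ((∫ ω, D ω ∂μ[|{ω | Z ω = 1}]) - ∫ ω, D ω ∂μ[|{ω | Z ω = 0}])) *
          ((μ[|{ω | Z ω = 0}] {ω | Y ω ≤ t}).toReal -
            (μ[|{ω | Z ω = 1}] {ω | Y ω ≤ t}).toReal)) ∧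
    ((∀ t : ℝ,
        (μ[|{ω | D1 ω = 1 ∧ D0 ω = 0}] {ω | Y0 ω ≤ t}).toReal =
          (μ[|{ω | D1 ω = 1 ∧ D0 ω = 0}] {ω | Y1 ω ≤ t}).toReal) ↔
      (∀ t : ℝ,
        (μ[|{ω | Z ω = 0}] {ω | Y ω ≤ t}).toReal =
          (μ[|{ω | Z ω = 1}] {ω | Y ω ≤ t}).toReal)) := by
  set C := {ω | D1 ω = 1 ∧ D0 ω = 0}
  have hindep_comp (g : ℝ × ℝ × ℝ × ℝ → ℝ) (hg : Measurable g) :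
      IndepFun Z (g ∘ fun ω => (Y0 ω, Y1 ω, D0 ω, D1 ω)) μ :=
    hindep.comp measurable_id hg
  have hD1eq (ω : Ω) (h : Z ω = 1) : D ω = D1 ω := by rw [hD, h]; ring
  have hD0eq (ω : Ω) (h : Z ω = 0) : D ω = D0 ω := by rw [hD, h]; ring
  have hK : (∫ ω, D ω ∂μ[|{ω | Z ω = 1}]) - ∫ ω, D ω ∂μ[|{ω | Z ω = 0}] = μ.real C := by
    rw [integral_cond_eq_measureReal_of_indepFun hZ hD1 hD1bin
        (hindep_comp (·.2.2.2) (by fun_prop)) hZ1.ne' hD1eq,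
      integral_cond_eq_measureReal_of_indepFun hZ hD0 hD0bin
        (hindep_comp (·.2.2.1) (by fun_prop)) hZ0.ne' hD0eq,
      measureReal_compliers_eq_sub hD0 hD0bin hD1bin hmono]
  have hF (t : ℝ) : (μ[|{ω | Z ω = 0}]).real {ω | Y ω ≤ t} -
      (μ[|{ω | Z ω = 1}]).real {ω | Y ω ≤ t} =
        μ.real (C ∩ {ω | Y0 ω ≤ t}) - μ.real (C ∩ {ω | Y1 ω ≤ t}) := by
    rw [cond_measureReal_setOf_le_eq_of_indepFun hZ (X := select D0 Y0 Y1)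
        (hindep_comp (fun p => p.2.2.1 * p.2.1 + (1 - p.2.2.1) * p.1) (by fun_prop)) hZ0.ne'
        (fun ω h => by rw [hYobs, hD0eq ω h]; rfl),
      cond_measureReal_setOf_le_eq_of_indepFun hZ (X := select D1 Y0 Y1)
        (hindep_comp (fun p => p.2.2.2 * p.2.1 + (1 - p.2.2.2) * p.1) (by fun_prop)) hZ1.ne'
        (fun ω h => by rw [hYobs, hD1eq ω h]; rfl)]
    exact measureReal_select_sub_select hD0 hD1 hY0 hD0bin hD1bin hmono measurableSet_Iic
  have hC : 0 < μ.real C := by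
    rw [measureReal_compliers_eq_sub hD0 hD0bin hD1bin hmono, sub_pos]
    exact ENNReal.toReal_strict_mono (measure_ne_top _ _) hnonzero
  have hCm : MeasurableSet C :=
    (hD1 (measurableSet_singleton 1)).inter (hD0 (measurableSet_singleton 0))
  have hmain (t : ℝ) : (μ[|C]).real {ω | Y0 ω ≤ t} - (μ[|C]).real {ω | Y1 ω ≤ t} =
      (μ.real C)⁻¹ * ((μ[|{ω | Z ω = 0}]).real {ω | Y ω ≤ t} -
        (μ[|{ω | Z ω = 1}]).real {ω | Y ω ≤ t}) := by
    rw [hF, cond_real_apply hCm, cond_real_apply hCm]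
    ring
  simp only [← measureReal_def, hK, one_div]
  refine ⟨hmain, forall_congr' fun t => ?_⟩
  rw [← sub_eq_zero, hmain t, mul_eq_zero, or_iff_right (inv_ne_zero hC.ne'), sub_eq_zero]

/-- Under the IV identification assumptions, for all `t`:
`F_co^{(0)}(t) − F_co^{(1)}(t) = K·(F₀(t) − F₁(t))` with
`K = 1/(E(D|Z=1) − E(D|Z=0))`; in particular `F_co^{(0)} = F_co^{(1)}` iff `F₀ = F₁`. -/
theorem complier_cdf_difference_identity {Ω : Type*} [MeasurableSpace Ω]
    (μ : Measure Ω) [IsProbabilityMeasure μ]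
    (Z D0 D1 Y0 Y1 D Y : Ω → ℝ)
    (hZ : Measurable Z) (hD0 : Measurable D0) (hD1 : Measurable D1)
    (hY0 : Measurable Y0) (hY1 : Measurable Y1)
    (hZbin : ∀ ω, Z ω = 0 ∨ Z ω = 1)
    (hD0bin : ∀ ω, D0 ω = 0 ∨ D0 ω = 1)
    (hD1bin : ∀ ω, D1 ω = 0 ∨ D1 ω = 1)
    (hD : ∀ ω, D ω = Z ω * D1 ω + (1 - Z ω) * D0 ω)
    (hYobs : ∀ ω, Y ω = D ω * Y1 ω + (1 - D ω) * Y0 ω)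
    (hindep : IndepFun Z (fun ω => (Y0 ω, Y1 ω, D0 ω, D1 ω)) μ)
    (hmono : ∀ᵐ ω ∂μ, D0 ω ≤ D1 ω)
    (hnonzero : μ {ω | D0 ω = 1} < μ {ω | D1 ω = 1})
    (hZ1 : 0 < μ {ω | Z ω = 1}) (hZ0 : 0 < μ {ω | Z ω = 0}) :
    (∀ t : ℝ,
      (μ[|{ω | D1 ω = 1 ∧ D0 ω = 0}] {ω | Y0 ω ≤ t}).toReal -
          (μ[|{ω | D1 ω = 1 ∧ D0 ω = 0}] {ω | Y1 ω ≤ t}).toReal =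
        (1 / ((∫ ω, D ω ∂μ[|{ω | Z ω = 1}]) - ∫ ω, D ω ∂μ[|{ω | Z ω = 0}])) *
          ((μ[|{ω | Z ω = 0}] {ω | Y ω ≤ t}).toReal -
            (μ[|{ω | Z ω = 1}] {ω | Y ω ≤ t}).toReal)) ∧
    ((∀ t : ℝ,
        (μ[|{ω | D1 ω = 1 ∧ D0 ω = 0}] {ω | Y0 ω ≤ t}).toReal =
          (μ[|{ω | D1 ω = 1 ∧ D0 ω = 0}] {ω | Y1 ω ≤ t}).toReal) ↔
      (∀ t : ℝ,
        (μ[|{ω | Z ω = 0}] {ω | Y ω ≤ t}).toReal =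
          (μ[|{ω | Z ω = 1}] {ω | Y ω ≤ t}).toReal)) :=
  complier_cdf_difference_identity_general μ Z D0 D1 Y0 Y1 D Y hZ hD0 hD1 hY0 hD0bin hD1bin hD hYobs
    hindep hmono hnonzero hZ1 hZ0
end

section
/- Let f₁,…,fₙ : (0,1) → ℝ with f_i(θ) = p_i·log θ + q_i·log(1−θ), p_i, q_i > 0, let w_i = p_i + q_i and u_i = p_i/w_i. Then the maximizer of Σ_{i=1}^{n} f_i(θ_i) over non-decreasing vectors θ₁ ≤ θ₂ ≤ ⋯ ≤ θₙ in (0,1) coincides with the minimizer of the weighted least squares problem Σ_{i=1}^{n} w_i (u_i − θ_i)² over non-decreasing vectors (i.e., the weighted isotonic regression of (u₁,…,uₙ) with weights (w₁,…,wₙ)). -/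
open Real

private lemma helper_t {S K : ℝ} (h : ∀ t : ℝ, 0 < t → t ≤ 1 → t * S ≤ t ^ 2 * K) : S ≤ 0 := by
  by_contra hS
  push_neg at hS
  have hK : 0 < K := by nlinarith [h 1 one_pos le_rfl]
  set t := min 1 (S / (2 * K)) with ht
  have ht0 : 0 < t := lt_min one_pos (by positivity)
  have ht1 : t ≤ 1 := min_le_left _ _
  have h2 := h t ht0 ht1
  have h3 : t ≤ S / (2 * K) := min_le_right _ _
  have h4 : t * (2 * K) ≤ S := by
    rw [← le_div_iff₀ (by positivity)]; exact h3
  nlinarith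

private lemma log_lb {a b : ℝ} (ha : 0 < a) (hb : 0 < b) :
    (b - a) / a - (b - a) ^ 2 / (a * b) ≤ log b - log a := by
  have h := Real.log_le_sub_one_of_pos (x := a / b) (by positivity)
  rw [Real.log_div ha.ne' hb.ne'] at h
  have e : (b - a) / a - (b - a) ^ 2 / (a * b) = (b - a) / b := by
    field_simp; ring
  rw [e]
  have h2 : (b - a) / b = 1 - a / b := by field_simp
  linarith

private lemma log_ub {a b : ℝ} (ha : 0 < a) (hb : 0 < b) :
    log b - log a ≤ (b - a) / a := by
  have h := Real.log_le_sub_one_of_pos (x := b / a) (by positivity)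
  rw [Real.log_div hb.ne' ha.ne'] at h
  have h2 : (b - a) / a = b / a - 1 := by field_simp
  linarith

private lemma log_lb' {a b m : ℝ} (ha : 0 < a) (hm : 0 < m) (hmb : m ≤ b) :
    (b - a) / a - (b - a) ^ 2 / (a * m) ≤ log b - log a := by
  have hb : 0 < b := lt_of_lt_of_le hm hmb
  have h1 := log_lb ha hb
  have h2 : (b - a) ^ 2 / (a * b) ≤ (b - a) ^ 2 / (a * m) := by
    apply div_le_div_of_nonneg_left (sq_nonneg _) (by positivity) (by nlinarith)
  linarith

private lemma exists_good_t (n : ℕ) (θ δ : ℕ → ℝ)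
    (hθmono : ∀ i j, 1 ≤ i → i ≤ j → j ≤ n → θ i ≤ θ j)
    (hmem : ∀ i ∈ Finset.Icc 1 n, θ i ∈ Set.Ioo (0:ℝ) 1)
    (hδ : ∀ i j, 1 ≤ i → i ≤ j → j ≤ n → θ i = θ j → δ i ≤ δ j) :
    ∃ t : ℝ, 0 < t ∧
      (∀ i j, 1 ≤ i → i ≤ j → j ≤ n → θ i + t * δ i ≤ θ j + t * δ j) ∧
      (∀ i ∈ Finset.Icc 1 n, θ i + t * δ i ∈ Set.Ioo (0:ℝ) 1) := by
  rcases Nat.eq_zero_or_pos n with h0 | hpos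
  · refine ⟨1, one_pos, ?_, ?_⟩
    · intro i j hi hij hj; exfalso; omega
    · intro i hi; simp [h0] at hi
  · have hne : (Finset.Icc 1 n).Nonempty := ⟨1, by simp; omega⟩
    have hne2 : ((Finset.Icc 1 n) ×ˢ (Finset.Icc 1 n)).Nonempty := hne.product hne
    set r : ℕ → ℝ := fun i => min (θ i) (1 - θ i) / (2 * (|δ i| + 1)) with hr
    set s : ℕ × ℕ → ℝ := fun ij =>
      if θ ij.1 < θ ij.2 then (θ ij.2 - θ ij.1) / (|δ ij.1| + |δ ij.2| + 1) else 1 with hs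
    set t := min ((Finset.Icc 1 n).inf' hne r)
      (((Finset.Icc 1 n) ×ˢ (Finset.Icc 1 n)).inf' hne2 s) with htdef
    have ht0 : 0 < t := by
      apply lt_min
      · rw [Finset.lt_inf'_iff]
        intro i hi
        obtain ⟨h1, h2⟩ := hmem i hi
        have : 0 < min (θ i) (1 - θ i) := lt_min h1 (by linarith)
        positivity
      · rw [Finset.lt_inf'_iff]
        intro ij hij
        simp only [hs]
        split
        · rename_i hlt
          have : (0:ℝ) < |δ ij.1| + |δ ij.2| + 1 := by positivity
          exact div_pos (by linarith) this
        · exact one_pos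
    refine ⟨t, ht0, ?_, ?_⟩
    · intro i j hi hij hj
      rcases eq_or_lt_of_le (hθmono i j hi hij hj) with heq | hlt
      · have hd := hδ i j hi hij hj heq
        rw [heq]
        nlinarith
      · have hmem2 : (i, j) ∈ (Finset.Icc 1 n) ×ˢ (Finset.Icc 1 n) := by
          rw [Finset.mem_product]
          constructor <;> rw [Finset.mem_Icc] <;> omega
        have hst : t ≤ s (i, j) := le_trans (min_le_right _ _) (Finset.inf'_le s hmem2)
        rw [hs] at hst
        simp only [if_pos hlt] at hst
        have hA : (0:ℝ) < |δ i| + |δ j| + 1 := by positivity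
        have h1 : t * (|δ i| + |δ j| + 1) ≤ θ j - θ i := by
          rw [← le_div_iff₀ hA]; exact hst
        have h2 : t * δ i ≤ t * |δ i| := mul_le_mul_of_nonneg_left (le_abs_self _) ht0.le
        have h3 : t * (-|δ j|) ≤ t * δ j := mul_le_mul_of_nonneg_left (neg_abs_le _) ht0.le
        nlinarith
    · intro i hi
      obtain ⟨h1, h2⟩ := hmem i hi
      have hrt : t ≤ r i := le_trans (min_le_left _ _) (Finset.inf'_le r hi)
      rw [hr] at hrt
      have hB : (0:ℝ) < 2 * (|δ i| + 1) := by positivity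
      have h3 : t * (2 * (|δ i| + 1)) ≤ min (θ i) (1 - θ i) := by
        rw [← le_div_iff₀ hB]; exact hrt
      have h4 : t * δ i ≤ t * |δ i| := mul_le_mul_of_nonneg_left (le_abs_self _) ht0.le
      have h5 : t * (-|δ i|) ≤ t * δ i := mul_le_mul_of_nonneg_left (neg_abs_le _) ht0.le
      have h6 : min (θ i) (1 - θ i) ≤ θ i := min_le_left _ _
      have h7 : min (θ i) (1 - θ i) ≤ 1 - θ i := min_le_right _ _
      constructor
      · nlinarith
      · nlinarith

/-- Equivalence of isotonic binomial-likelihood maximization and weighted isotonic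
least squares: a non-decreasing vector `θ` with entries in `(0,1)` maximizes
`Σ (p_i log θ_i + q_i log(1−θ_i))` over non-decreasing `(0,1)`-valued vectors iff
it minimizes `Σ w_i (u_i − θ_i)²` (with `w_i = p_i + q_i`, `u_i = p_i/w_i`) over all
non-decreasing real vectors. -/
theorem isotonic_loglik_eq_weighted_ls (n : ℕ) (p q : ℕ → ℝ)
    (hpq : ∀ i ∈ Finset.Icc 1 n, 0 < p i ∧ 0 < q i)
    (θ : ℕ → ℝ) (hθmem : ∀ i ∈ Finset.Icc 1 n, θ i ∈ Set.Ioo (0:ℝ) 1)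
    (hθmono : ∀ i j, 1 ≤ i → i ≤ j → j ≤ n → θ i ≤ θ j) :
    ((∀ η : ℕ → ℝ, (∀ i ∈ Finset.Icc 1 n, η i ∈ Set.Ioo (0:ℝ) 1) →
        (∀ i j, 1 ≤ i → i ≤ j → j ≤ n → η i ≤ η j) →
        ∑ i ∈ Finset.Icc 1 n, (p i * log (η i) + q i * log (1 - η i)) ≤
          ∑ i ∈ Finset.Icc 1 n, (p i * log (θ i) + q i * log (1 - θ i))) ↔
      (∀ η : ℕ → ℝ, (∀ i j, 1 ≤ i → i ≤ j → j ≤ n → η i ≤ η j) →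
        ∑ i ∈ Finset.Icc 1 n, (p i + q i) * (p i / (p i + q i) - θ i) ^ 2 ≤
          ∑ i ∈ Finset.Icc 1 n, (p i + q i) * (p i / (p i + q i) - η i) ^ 2)) := by
  classical
  have wpos : ∀ i ∈ Finset.Icc 1 n, 0 < p i + q i := by
    intro i hi; have := hpq i hi; linarith [this.1, this.2]
  set g : ℕ → ℝ := fun i => (p i + q i) * (p i / (p i + q i) - θ i) with hgdef
  set h : ℕ → ℝ := fun i => p i / θ i - q i / (1 - θ i) with hhdef
  -- sum identity for least squares
  have sumid : ∀ η : ℕ → ℝ,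
      ∑ i ∈ Finset.Icc 1 n, (p i + q i) * (p i / (p i + q i) - η i) ^ 2
        = ∑ i ∈ Finset.Icc 1 n, (p i + q i) * (p i / (p i + q i) - θ i) ^ 2
          + ∑ i ∈ Finset.Icc 1 n, (p i + q i) * (η i - θ i) ^ 2
          - 2 * ∑ i ∈ Finset.Icc 1 n, g i * (η i - θ i) := by
    intro η
    rw [Finset.mul_sum, ← Finset.sum_add_distrib, ← Finset.sum_sub_distrib]
    apply Finset.sum_congr rfl
    intro i _
    simp only [hgdef]
    ring
  -- Gcond → LS minimality
  have LSofG : (∀ η : ℕ → ℝ, (∀ i j, 1 ≤ i → i ≤ j → j ≤ n → η i ≤ η j) →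
      ∑ i ∈ Finset.Icc 1 n, g i * (η i - θ i) ≤ 0) →
      (∀ η : ℕ → ℝ, (∀ i j, 1 ≤ i → i ≤ j → j ≤ n → η i ≤ η j) →
        ∑ i ∈ Finset.Icc 1 n, (p i + q i) * (p i / (p i + q i) - θ i) ^ 2 ≤
          ∑ i ∈ Finset.Icc 1 n, (p i + q i) * (p i / (p i + q i) - η i) ^ 2) := by
    intro hG η hη
    have h1 := hG η hη
    have h2 : (0:ℝ) ≤ ∑ i ∈ Finset.Icc 1 n, (p i + q i) * (η i - θ i) ^ 2 :=
      Finset.sum_nonneg fun i hi => mul_nonneg (wpos i hi).le (sq_nonneg _)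
    rw [sumid η]
    linarith
  -- LS minimality → Gcond
  have GofLS : (∀ η : ℕ → ℝ, (∀ i j, 1 ≤ i → i ≤ j → j ≤ n → η i ≤ η j) →
        ∑ i ∈ Finset.Icc 1 n, (p i + q i) * (p i / (p i + q i) - θ i) ^ 2 ≤
          ∑ i ∈ Finset.Icc 1 n, (p i + q i) * (p i / (p i + q i) - η i) ^ 2) →
      (∀ η : ℕ → ℝ, (∀ i j, 1 ≤ i → i ≤ j → j ≤ n → η i ≤ η j) →
        ∑ i ∈ Finset.Icc 1 n, g i * (η i - θ i) ≤ 0) := by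
    intro hmin η hη
    have h2 : 2 * ∑ i ∈ Finset.Icc 1 n, g i * (η i - θ i) ≤ 0 := by
      apply helper_t (K := ∑ i ∈ Finset.Icc 1 n, (p i + q i) * (η i - θ i) ^ 2)
      intro t ht0 ht1
      set ηt : ℕ → ℝ := fun i => θ i + t * (η i - θ i) with hηt
      have hmono' : ∀ i j, 1 ≤ i → i ≤ j → j ≤ n → ηt i ≤ ηt j := by
        intro i j hi hij hj
        have a1 := hθmono i j hi hij hj
        have a2 := hη i j hi hij hj
        simp only [hηt]; nlinarith
      have hmin' := hmin ηt hmono'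
      rw [sumid ηt] at hmin'
      have e1 : ∑ i ∈ Finset.Icc 1 n, (p i + q i) * (ηt i - θ i) ^ 2
          = t ^ 2 * ∑ i ∈ Finset.Icc 1 n, (p i + q i) * (η i - θ i) ^ 2 := by
        rw [Finset.mul_sum]
        apply Finset.sum_congr rfl
        intro i _; simp only [hηt]; ring
      have e2 : ∑ i ∈ Finset.Icc 1 n, g i * (ηt i - θ i)
          = t * ∑ i ∈ Finset.Icc 1 n, g i * (η i - θ i) := by
        rw [Finset.mul_sum]
        apply Finset.sum_congr rfl
        intro i _; simp only [hηt]; ring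
      rw [e1, e2] at hmin'
      linarith
    linarith
  -- Hcond → LL maximality
  have LLofH : (∀ η : ℕ → ℝ, (∀ i ∈ Finset.Icc 1 n, η i ∈ Set.Ioo (0:ℝ) 1) →
      (∀ i j, 1 ≤ i → i ≤ j → j ≤ n → η i ≤ η j) →
      ∑ i ∈ Finset.Icc 1 n, h i * (η i - θ i) ≤ 0) →
      (∀ η : ℕ → ℝ, (∀ i ∈ Finset.Icc 1 n, η i ∈ Set.Ioo (0:ℝ) 1) →
        (∀ i j, 1 ≤ i → i ≤ j → j ≤ n → η i ≤ η j) →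
        ∑ i ∈ Finset.Icc 1 n, (p i * log (η i) + q i * log (1 - η i)) ≤
          ∑ i ∈ Finset.Icc 1 n, (p i * log (θ i) + q i * log (1 - θ i))) := by
    intro hH η hηmem hηmono
    have key : ∀ i ∈ Finset.Icc 1 n,
        p i * log (η i) + q i * log (1 - η i) ≤
          (p i * log (θ i) + q i * log (1 - θ i)) + h i * (η i - θ i) := by
      intro i hi
      obtain ⟨hp, hq⟩ := hpq i hi
      obtain ⟨ht1, ht2⟩ := hθmem i hi
      obtain ⟨he1, he2⟩ := hηmem i hi
      have l1 : log (η i) - log (θ i) ≤ (η i - θ i) / θ i := log_ub ht1 he1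
      have l2 : log (1 - η i) - log (1 - θ i) ≤ ((1 - η i) - (1 - θ i)) / (1 - θ i) :=
        log_ub (by linarith) (by linarith)
      have e : h i * (η i - θ i)
          = p i * ((η i - θ i) / θ i) + q i * (((1 - η i) - (1 - θ i)) / (1 - θ i)) := by
        simp only [hhdef]; ring
      have m1 := mul_le_mul_of_nonneg_left l1 hp.le
      have m2 := mul_le_mul_of_nonneg_left l2 hq.le
      rw [mul_sub] at m1 m2
      rw [e]
      linarith
    calc ∑ i ∈ Finset.Icc 1 n, (p i * log (η i) + q i * log (1 - η i))
        ≤ ∑ i ∈ Finset.Icc 1 n,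
            ((p i * log (θ i) + q i * log (1 - θ i)) + h i * (η i - θ i)) :=
          Finset.sum_le_sum key
      _ = ∑ i ∈ Finset.Icc 1 n, (p i * log (θ i) + q i * log (1 - θ i))
            + ∑ i ∈ Finset.Icc 1 n, h i * (η i - θ i) := Finset.sum_add_distrib
      _ ≤ ∑ i ∈ Finset.Icc 1 n, (p i * log (θ i) + q i * log (1 - θ i)) := by
          linarith [hH η hηmem hηmono]
  -- LL maximality → Hcond
  have HofLL : (∀ η : ℕ → ℝ, (∀ i ∈ Finset.Icc 1 n, η i ∈ Set.Ioo (0:ℝ) 1) →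
        (∀ i j, 1 ≤ i → i ≤ j → j ≤ n → η i ≤ η j) →
        ∑ i ∈ Finset.Icc 1 n, (p i * log (η i) + q i * log (1 - η i)) ≤
          ∑ i ∈ Finset.Icc 1 n, (p i * log (θ i) + q i * log (1 - θ i))) →
      (∀ η : ℕ → ℝ, (∀ i ∈ Finset.Icc 1 n, η i ∈ Set.Ioo (0:ℝ) 1) →
        (∀ i j, 1 ≤ i → i ≤ j → j ≤ n → η i ≤ η j) →
        ∑ i ∈ Finset.Icc 1 n, h i * (η i - θ i) ≤ 0) := by
    intro hLL η hηmem hηmono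
    apply helper_t (K := ∑ i ∈ Finset.Icc 1 n,
      (p i * ((η i - θ i) ^ 2 / (θ i * min (θ i) (η i)))
        + q i * ((η i - θ i) ^ 2 / ((1 - θ i) * min (1 - θ i) (1 - η i)))))
    intro t ht0 ht1
    set ηt : ℕ → ℝ := fun i => θ i + t * (η i - θ i) with hηt
    have hmono' : ∀ i j, 1 ≤ i → i ≤ j → j ≤ n → ηt i ≤ ηt j := by
      intro i j hi hij hj
      have a1 := hθmono i j hi hij hj
      have a2 := hηmono i j hi hij hj
      simp only [hηt]; nlinarith
    have hmem' : ∀ i ∈ Finset.Icc 1 n, ηt i ∈ Set.Ioo (0:ℝ) 1 := by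
      intro i hi
      obtain ⟨ht1', ht2'⟩ := hθmem i hi
      obtain ⟨he1, he2⟩ := hηmem i hi
      constructor <;> simp only [hηt] <;> nlinarith
    have hub := hLL ηt hmem' hmono'
    have key : ∀ i ∈ Finset.Icc 1 n,
        (p i * log (θ i) + q i * log (1 - θ i))
          + (t * (h i * (η i - θ i))
            - t ^ 2 * (p i * ((η i - θ i) ^ 2 / (θ i * min (θ i) (η i)))
              + q i * ((η i - θ i) ^ 2 / ((1 - θ i) * min (1 - θ i) (1 - η i)))))
          ≤ p i * log (ηt i) + q i * log (1 - ηt i) := by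
      intro i hi
      obtain ⟨hp, hq⟩ := hpq i hi
      obtain ⟨ht1', ht2'⟩ := hθmem i hi
      obtain ⟨he1, he2⟩ := hηmem i hi
      have hm1 : 0 < min (θ i) (η i) := lt_min ht1' he1
      have hm2 : 0 < min (1 - θ i) (1 - η i) := lt_min (by linarith) (by linarith)
      have hmb1 : min (θ i) (η i) ≤ ηt i := by
        simp only [hηt]
        rcases le_total (θ i) (η i) with hc | hc
        · have := min_le_left (θ i) (η i); nlinarith
        · have := min_le_right (θ i) (η i); nlinarith
      have hmb2 : min (1 - θ i) (1 - η i) ≤ 1 - ηt i := by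
        simp only [hηt]
        rcases le_total (θ i) (η i) with hc | hc
        · have := min_le_right (1 - θ i) (1 - η i); nlinarith
        · have := min_le_left (1 - θ i) (1 - η i); nlinarith
      have lbA := log_lb' (a := θ i) (b := ηt i) (m := min (θ i) (η i)) ht1' hm1 hmb1
      have lbB := log_lb' (a := 1 - θ i) (b := 1 - ηt i) (m := min (1 - θ i) (1 - η i))
        (by linarith) hm2 hmb2
      have eb1 : ηt i - θ i = t * (η i - θ i) := by simp only [hηt]; ring
      have eb2 : (1 - ηt i) - (1 - θ i) = -(t * (η i - θ i)) := by simp only [hηt]; ring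
      rw [eb1] at lbA
      rw [eb2] at lbB
      have e : t * (h i * (η i - θ i))
            - t ^ 2 * (p i * ((η i - θ i) ^ 2 / (θ i * min (θ i) (η i)))
              + q i * ((η i - θ i) ^ 2 / ((1 - θ i) * min (1 - θ i) (1 - η i))))
          = p i * ((t * (η i - θ i)) / θ i
              - (t * (η i - θ i)) ^ 2 / (θ i * min (θ i) (η i)))
            + q i * ((-(t * (η i - θ i))) / (1 - θ i)
              - (-(t * (η i - θ i))) ^ 2 / ((1 - θ i) * min (1 - θ i) (1 - η i))) := by
        simp only [hhdef]; ring
      nlinarith [mul_le_mul_of_nonneg_left lbA hp.le, mul_le_mul_of_nonneg_left lbB hq.le]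
    have hsum := Finset.sum_le_sum key
    rw [Finset.sum_add_distrib, Finset.sum_sub_distrib, ← Finset.mul_sum, ← Finset.mul_sum] at hsum
    linarith
  -- bridge: Gcond → Hcond
  have GtoH : (∀ η : ℕ → ℝ, (∀ i j, 1 ≤ i → i ≤ j → j ≤ n → η i ≤ η j) →
      ∑ i ∈ Finset.Icc 1 n, g i * (η i - θ i) ≤ 0) →
      (∀ η : ℕ → ℝ, (∀ i ∈ Finset.Icc 1 n, η i ∈ Set.Ioo (0:ℝ) 1) →
        (∀ i j, 1 ≤ i → i ≤ j → j ≤ n → η i ≤ η j) →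
        ∑ i ∈ Finset.Icc 1 n, h i * (η i - θ i) ≤ 0) := by
    intro hG η hηmem hηmono
    set δ' : ℕ → ℝ := fun i => (η i - θ i) / (θ i * (1 - θ i)) with hδ'
    obtain ⟨t, ht0, hmono', _⟩ := exists_good_t n θ δ' hθmono hθmem (by
      intro i j hi hij hj heq
      have hiI : i ∈ Finset.Icc 1 n := Finset.mem_Icc.mpr ⟨hi, hij.trans hj⟩
      have hjI : j ∈ Finset.Icc 1 n := Finset.mem_Icc.mpr ⟨hi.trans hij, hj⟩
      obtain ⟨a1, a2⟩ := hθmem i hiI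
      have hnum : η i - θ i ≤ η j - θ j := by
        have := hηmono i j hi hij hj; rw [heq]; linarith
      simp only [hδ']
      rw [show θ i = θ j from heq] at a1 a2 hnum ⊢
      exact (div_le_div_iff_of_pos_right (by nlinarith)).mpr hnum)
    have hGapp := hG (fun i => θ i + t * δ' i) hmono'
    have e : ∑ i ∈ Finset.Icc 1 n, g i * ((θ i + t * δ' i) - θ i)
        = t * ∑ i ∈ Finset.Icc 1 n, h i * (η i - θ i) := by
      rw [Finset.mul_sum]
      apply Finset.sum_congr rfl
      intro i hi
      obtain ⟨a1, a2⟩ := hθmem i hi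
      have hw := wpos i hi
      have h1 : θ i ≠ 0 := a1.ne'
      have h2 : (1 : ℝ) - θ i ≠ 0 := by linarith
      have h3 : p i + q i ≠ 0 := hw.ne'
      simp only [hgdef, hδ', hhdef]
      field_simp
      ring
    have hfin : t * ∑ i ∈ Finset.Icc 1 n, h i * (η i - θ i) ≤ 0 := by
      rw [← e]; simpa using hGapp
    nlinarith
  -- bridge: Hcond → Gcond
  have HtoG : (∀ η : ℕ → ℝ, (∀ i ∈ Finset.Icc 1 n, η i ∈ Set.Ioo (0:ℝ) 1) →
      (∀ i j, 1 ≤ i → i ≤ j → j ≤ n → η i ≤ η j) →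
      ∑ i ∈ Finset.Icc 1 n, h i * (η i - θ i) ≤ 0) →
      (∀ η : ℕ → ℝ, (∀ i j, 1 ≤ i → i ≤ j → j ≤ n → η i ≤ η j) →
        ∑ i ∈ Finset.Icc 1 n, g i * (η i - θ i) ≤ 0) := by
    intro hH η hηmono
    set δ' : ℕ → ℝ := fun i => (η i - θ i) * (θ i * (1 - θ i)) with hδ'
    obtain ⟨t, ht0, hmono', hmem'⟩ := exists_good_t n θ δ' hθmono hθmem (by
      intro i j hi hij hj heq
      have hnum : η i - θ i ≤ η j - θ j := by
        have := hηmono i j hi hij hj; rw [heq]; linarith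
      have hjI : j ∈ Finset.Icc 1 n := Finset.mem_Icc.mpr ⟨hi.trans hij, hj⟩
      obtain ⟨a1, a2⟩ := hθmem j hjI
      simp only [hδ']
      rw [show θ i = θ j from heq] at hnum ⊢
      exact mul_le_mul_of_nonneg_right hnum (by nlinarith))
    have hHapp := hH (fun i => θ i + t * δ' i) hmem' hmono'
    have e : ∑ i ∈ Finset.Icc 1 n, h i * ((θ i + t * δ' i) - θ i)
        = t * ∑ i ∈ Finset.Icc 1 n, g i * (η i - θ i) := by
      rw [Finset.mul_sum]
      apply Finset.sum_congr rfl
      intro i hi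
      obtain ⟨a1, a2⟩ := hθmem i hi
      have hw := wpos i hi
      have h1 : θ i ≠ 0 := a1.ne'
      have h2 : (1 : ℝ) - θ i ≠ 0 := by linarith
      have h3 : p i + q i ≠ 0 := hw.ne'
      simp only [hgdef, hδ', hhdef]
      field_simp
      ring
    have hfin : t * ∑ i ∈ Finset.Icc 1 n, g i * (η i - θ i) ≤ 0 := by
      rw [← e]; simpa using hHapp
    nlinarith
  constructor
  · intro hLL
    exact LSofG (HtoG (HofLL hLL))
  · intro hLS
    exact LLofH (GtoH (GofLS hLS))
end

section
/- If η₀₀ = (1−υ)(1−χ_at), η₀₁ = (1−υ)χ_at, η₁₀ = υχ_nt, η₁₁ = υ(1−χ_nt) with υ, χ_at, χ_nt ∈ (0,1), and χ_co := 1 − χ_nt − χ_at > 0, λ₀ := χ_co/(χ_co + χ_nt), λ₁ := χ_co/(χ_co + χ_at), then defining λ₀₀ = λ₀, λ₀₁ = λ₁/(1−λ₁), λ₁₀ = λ₀/(1−λ₀), λ₁₁ = λ₁, one has Σ_{u,v ∈ {0,1}} 1/(λ_{uv}² · η_{uv}) = 1/(χ_co² · υ · (1−υ)). -/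
/-! Writing `p₀₀ = 1 - χ_at`, `p₀₁ = χ_at`, `p₁₀ = χ_nt`, `p₁₁ = 1 - χ_nt`, every weight is
`λ_{uv} = χ_co / p_{uv}` (for the off-diagonal ones since `λ / (1 - λ) = c / n` when `λ = c / (c + n)`),
and `η_{uv}` is `p_{uv}` times `1 - υ` or `υ`. Hence the `(u, v)` term is `p_{uv} / (χ_co² (1 - υ))`
or `p_{uv} / (χ_co² υ)`, and the `p_{uv}` of each row sum to `1`. -/

lemma div_div_one_sub_div_add {K : Type*} [Field K] (c n : K) (hcn : c + n ≠ 0) :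
    c / (c + n) / (1 - c / (c + n)) = c / n := by
  have h_one_sub : 1 - c / (c + n) = n / (c + n) := by
    field_simp
    ring
  rw [h_one_sub, div_div_div_cancel_right₀ hcn]

lemma one_div_div_sq_mul_mul {K : Type*} [Field K] (c w p : K) (hp : p ≠ 0) :
    1 / ((c / p) ^ 2 * (w * p)) = p / (c ^ 2 * w) := by
  field_simp

theorem blrt_variance_identity_general (υ χat χnt χco lam0 lam1 : ℝ)
    (η00 η01 η10 η11 lam00 lam01 lam10 lam11 : ℝ)
    (hυ : υ ∈ Set.Ioo (0:ℝ) 1) (hat : χat ∈ Set.Ioo (0:ℝ) 1)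
    (hnt : χnt ∈ Set.Ioo (0:ℝ) 1)
    (hco : χco = 1 - χnt - χat)
    (hlam0 : lam0 = χco / (χco + χnt)) (hlam1 : lam1 = χco / (χco + χat))
    (h00 : η00 = (1 - υ) * (1 - χat)) (h01 : η01 = (1 - υ) * χat)
    (h10 : η10 = υ * χnt) (h11 : η11 = υ * (1 - χnt))
    (hl00 : lam00 = lam0) (hl01 : lam01 = lam1 / (1 - lam1))
    (hl10 : lam10 = lam0 / (1 - lam0)) (hl11 : lam11 = lam1) :
    1 / (lam00 ^ 2 * η00) + 1 / (lam01 ^ 2 * η01) +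
        1 / (lam10 ^ 2 * η10) + 1 / (lam11 ^ 2 * η11) =
      1 / (χco ^ 2 * υ * (1 - υ)) := by
  have hco_nt : χco + χnt = 1 - χat := by rw [hco]; ring
  have hco_at : χco + χat = 1 - χnt := by rw [hco]; ring
  have hp00 : 1 - χat ≠ 0 := (sub_pos.2 hat.2).ne'
  have hp01 : χat ≠ 0 := hat.1.ne'
  have hp10 : χnt ≠ 0 := hnt.1.ne'
  have hp11 : 1 - χnt ≠ 0 := (sub_pos.2 hnt.2).ne'
  have hlam01 : lam01 = χco / χat := by
    rw [hl01, hlam1, div_div_one_sub_div_add _ _ (by rw [hco_at]; exact hp11)]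
  have hlam10 : lam10 = χco / χnt := by
    rw [hl10, hlam0, div_div_one_sub_div_add _ _ (by rw [hco_nt]; exact hp00)]
  rw [hl00, hlam0, hco_nt, h00, one_div_div_sq_mul_mul _ _ _ hp00,
    hlam01, h01, one_div_div_sq_mul_mul _ _ _ hp01,
    hlam10, h10, one_div_div_sq_mul_mul _ _ _ hp10,
    hl11, hlam1, hco_at, h11, one_div_div_sq_mul_mul _ _ _ hp11]
  have hυ0 : υ ≠ 0 := hυ.1.ne'
  have hυ1 : 1 - υ ≠ 0 := (sub_pos.2 hυ.2).ne'
  field_simp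
  ring

/-- Variance-weight identity for the BLRT limit: with
`η₀₀ = (1−υ)(1−χ_at)`, `η₀₁ = (1−υ)χ_at`, `η₁₀ = υχ_nt`, `η₁₁ = υ(1−χ_nt)`,
`χ_co = 1 − χ_nt − χ_at > 0`, `λ₀ = χ_co/(χ_co+χ_nt)`, `λ₁ = χ_co/(χ_co+χ_at)`,
`λ₀₀ = λ₀`, `λ₀₁ = λ₁/(1−λ₁)`, `λ₁₀ = λ₀/(1−λ₀)`, `λ₁₁ = λ₁`, one has
`Σ_{u,v} 1/(λ_{uv}²·η_{uv}) = 1/(χ_co²·υ·(1−υ))`. -/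
theorem blrt_variance_identity (υ χat χnt χco lam0 lam1 : ℝ)
    (η00 η01 η10 η11 lam00 lam01 lam10 lam11 : ℝ)
    (hυ : υ ∈ Set.Ioo (0:ℝ) 1) (hat : χat ∈ Set.Ioo (0:ℝ) 1)
    (hnt : χnt ∈ Set.Ioo (0:ℝ) 1)
    (hco : χco = 1 - χnt - χat) (hco_pos : 0 < χco)
    (hlam0 : lam0 = χco / (χco + χnt)) (hlam1 : lam1 = χco / (χco + χat))
    (h00 : η00 = (1 - υ) * (1 - χat)) (h01 : η01 = (1 - υ) * χat)
    (h10 : η10 = υ * χnt) (h11 : η11 = υ * (1 - χnt))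
    (hl00 : lam00 = lam0) (hl01 : lam01 = lam1 / (1 - lam1))
    (hl10 : lam10 = lam0 / (1 - lam0)) (hl11 : lam11 = lam1) :
    1 / (lam00 ^ 2 * η00) + 1 / (lam01 ^ 2 * η01) +
        1 / (lam10 ^ 2 * η10) + 1 / (lam11 ^ 2 * η11) =
      1 / (χco ^ 2 * υ * (1 - υ)) :=
  blrt_variance_identity_general υ χat χnt χco lam0 lam1 η00 η01 η10 η11 lam00 lam01 lam10 lam11 hυ
    hat hnt hco hlam0 hlam1 h00 h01 h10 h11 hl00 hl01 hl10 hl11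
end
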